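/- Decomposition of finite (itov) orders: a finite partial order P has property (itov) if and only if all of the following hold, where U denotes the union of all maximum chains of P: (a) U is a trunk of P; (b) the induced suborder on P \ U has property (itov); (c) every element of P \ U is regular to U (for all y, z ∈ U with y = z or y ∼ z, it stands in the same order relation to y as to z); (d) there is no induced suborder of P isomorphic to O_obs1 or to O_obs2 having at least one element in U and at least two elements in P \ U. -/
import Mathlib


variable {P : Type*} [PartialOrder P]

/-- Two elements of a partial order are incomparable if neither is `≤` the other. -/
def Incomp (x y : P) : Prop := x ≠ y ∧ ¬x ≤ y ∧ ¬y ≤ x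

/-- Four elements realize the pattern of `O_obs1` ('2+2'). -/
def Obs1At (a b c d : P) : Prop :=
  a < b ∧ c < d ∧ Incomp a c ∧ Incomp a d ∧ Incomp b c ∧ Incomp b d

/-- Four elements realize the pattern of `O_obs2` ('N'). -/
def Obs2At (a b c d : P) : Prop :=
  a < b ∧ c < d ∧ c < b ∧ Incomp a c ∧ Incomp a d ∧ Incomp b d

/-- Property (itov): no induced suborder isomorphic to `O_obs1` nor to `O_obs2`. -/
def Itov (P : Type*) [PartialOrder P] : Prop :=
  (¬∃ a b c d : P, Obs1At a b c d) ∧ (¬∃ a b c d : P, Obs2At a b c d)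

/-- The induced suborder on a set `S` has property (itov): no four elements of `S`
realize the pattern of `O_obs1` or of `O_obs2`. -/
def ItovOn (S : Set P) : Prop :=
  ¬∃ a b c d : P, a ∈ S ∧ b ∈ S ∧ c ∈ S ∧ d ∈ S ∧
    (Obs1At a b c d ∨ Obs2At a b c d)

/-- A subset `T` of a partial order is a trunk if the incomparability relation is
transitive on `T`. -/
def IsTrunkOn (T : Set P) : Prop :=
  ∀ x y z : P, x ∈ T → y ∈ T → z ∈ T → x ≠ z → Incomp x y → Incomp y z → Incomp x z

/-- A maximum chain of a finite partial order: a chain of maximum cardinality. -/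
def IsMaximumChain (C : Set P) : Prop :=
  IsChain (· ≤ ·) C ∧ ∀ D : Set P, IsChain (· ≤ ·) D → D.ncard ≤ C.ncard

/-- The union of all maximum chains of `P`. -/
def maxChainUnion (P : Type*) [PartialOrder P] : Set P :=
  {x : P | ∃ C : Set P, IsMaximumChain C ∧ x ∈ C}

/-- `x` is regular to a trunk `T`: `x` stands in the same order relation to any two
equal or incomparable elements of `T`. -/
def RegularTo (x : P) (T : Set P) : Prop :=
  ∀ y ∈ T, ∀ z ∈ T, (y = z ∨ Incomp y z) → ((x < y ↔ x < z) ∧ (y < x ↔ z < x))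

section AuxiliaryLemmas

lemma incompSymm {x y : P} (h : Incomp x y) : Incomp y x := ⟨h.1.symm, h.2.2, h.2.1⟩

lemma four_cases (u v : P) : u < v ∨ v < u ∨ u = v ∨ Incomp u v := by
  by_cases h1 : u ≤ v
  · rcases eq_or_lt_of_le h1 with h | h
    · exact Or.inr (Or.inr (Or.inl h))
    · exact Or.inl h
  · by_cases h2 : v ≤ u
    · exact Or.inr (Or.inl (lt_of_le_of_ne h2 fun e => h1 (le_of_eq e.symm)))
    · exact Or.inr (Or.inr (Or.inr ⟨fun e => h1 (le_of_eq e), h1, h2⟩))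

lemma mem_U_of_replace [Fintype P] {C : Set P} (hC : IsMaximumChain C) {y : P} (hy : y ∈ C)
    (x : P) (hb : ∀ c ∈ C, c < y → c < x) (ha : ∀ c ∈ C, y < c → x < c) :
    x ∈ maxChainUnion P := by
  by_cases hxC : x ∈ C
  · exact ⟨C, hC, hxC⟩
  have key : ∀ c ∈ C, c ≠ y → c < x ∨ x < c := by
    intro c hc hcy
    rcases hC.1 hc hy hcy with h | h
    · exact Or.inl (hb c hc (lt_of_le_of_ne h hcy))
    · exact Or.inr (ha c hc (lt_of_le_of_ne h (Ne.symm hcy)))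
  have hchain : IsChain (· ≤ ·) (insert x (C \ {y})) := by
    intro u hu v hv huv
    rcases hu with rfl | hu
    · rcases hv with rfl | hv
      · exact absurd rfl huv
      · rcases key v hv.1 hv.2 with h | h
        · exact Or.inr h.le
        · exact Or.inl h.le
    · rcases hv with rfl | hv
      · rcases key u hu.1 hu.2 with h | h
        · exact Or.inl h.le
        · exact Or.inr h.le
      · exact hC.1 hu.1 hv.1 huv
  refine ⟨insert x (C \ {y}), ⟨hchain, fun D hD => ?_⟩, Set.mem_insert _ _⟩
  have h1 : (insert x (C \ {y})).ncard = C.ncard := by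
    rw [Set.ncard_insert_of_notMem (fun h => hxC h.1), Set.ncard_diff_singleton_of_mem hy]
    have : 0 < C.ncard := (Set.ncard_pos (Set.toFinite C)).mpr ⟨y, hy⟩
    omega
  rw [h1]; exact hC.2 D hD

lemma no_insert_two [Fintype P] {C : Set P} (hC : IsMaximumChain C) {y : P} (hy : y ∈ C)
    {x z : P} (hxz : x < z) (hxC : x ∉ C) (hzC : z ∉ C)
    (hb : ∀ c ∈ C, c < y → c < x) (ha : ∀ c ∈ C, y < c → z < c) : False := by
  have key : ∀ c ∈ C, c ≠ y → c < x ∨ z < c := by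
    intro c hc hcy
    rcases hC.1 hc hy hcy with h | h
    · exact Or.inl (hb c hc (lt_of_le_of_ne h hcy))
    · exact Or.inr (ha c hc (lt_of_le_of_ne h (Ne.symm hcy)))
  have hchain : IsChain (· ≤ ·) (insert x (insert z (C \ {y}))) := by
    intro u hu v hv huv
    rcases hu with rfl | hu
    · rcases hv with rfl | hv
      · exact absurd rfl huv
      rcases hv with rfl | hv
      · exact Or.inl hxz.le
      · rcases key v hv.1 hv.2 with h | h
        · exact Or.inr h.le
        · exact Or.inl (hxz.trans h).le
    rcases hu with rfl | hu
    · rcases hv with rfl | hv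
      · exact Or.inr hxz.le
      rcases hv with rfl | hv
      · exact absurd rfl huv
      · rcases key v hv.1 hv.2 with h | h
        · exact Or.inr (h.trans hxz).le
        · exact Or.inl h.le
    · rcases hv with rfl | hv
      · rcases key u hu.1 hu.2 with h | h
        · exact Or.inl h.le
        · exact Or.inr (hxz.trans h).le
      rcases hv with rfl | hv
      · rcases key u hu.1 hu.2 with h | h
        · exact Or.inl (h.trans hxz).le
        · exact Or.inr h.le
      · exact hC.1 hu.1 hv.1 huv
  have h1 : (insert x (insert z (C \ {y}))).ncard = C.ncard + 1 := by
    have hz' : z ∉ C \ {y} := fun h => hzC h.1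
    have hx' : x ∉ insert z (C \ {y}) := by
      rintro (h | h)
      · exact hxz.ne h
      · exact hxC h.1
    rw [Set.ncard_insert_of_notMem hx', Set.ncard_insert_of_notMem hz',
        Set.ncard_diff_singleton_of_mem hy]
    have : 0 < C.ncard := (Set.ncard_pos (Set.toFinite C)).mpr ⟨y, hy⟩
    omega
  have h2 := hC.2 _ hchain
  omega

lemma trunk_aux [Fintype P] (hI : Itov P) {x y z : P} (hyU : y ∈ maxChainUnion P)
    (hxy : Incomp x y) (hyz : Incomp y z) (hxz : x < z) : False := by
  obtain ⟨C, hC, hyC⟩ := hyU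
  have hxC : x ∉ C := by
    intro h
    rcases hC.1 h hyC hxy.1 with h' | h'
    · exact hxy.2.1 h'
    · exact hxy.2.2 h'
  have hzC : z ∉ C := by
    intro h
    rcases hC.1 hyC h hyz.1 with h' | h'
    · exact hyz.2.1 h'
    · exact hyz.2.2 h'
  refine no_insert_two hC hyC hxz hxC hzC ?_ ?_
  · intro b hbC hby
    rcases four_cases b x with h | h | h | h
    · exact h
    · exact absurd (h.trans hby).le hxy.2.1
    · exact absurd ((h ▸ hby : x < y)).le hxy.2.1
    · rcases four_cases b z with h2 | h2 | h2 | h2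
      · exact absurd ⟨x, z, b, y, hxz, hby, h2, incompSymm h, hxy, incompSymm hyz⟩ hI.2
      · exact absurd (h2.trans hby).le hyz.2.2
      · exact absurd ((h2 ▸ hby : z < y)).le hyz.2.2
      · exact absurd ⟨x, z, b, y, hxz, hby, incompSymm h, hxy, incompSymm h2, incompSymm hyz⟩ hI.1
  · intro a haC hya
    rcases four_cases a z with h | h | h | h
    · exact absurd (hya.trans h).le hyz.2.1
    · exact h
    · exact absurd ((h ▸ hya : y < z)).le hyz.2.1
    · rcases four_cases a x with h2 | h2 | h2 | h2
      · exact absurd (h2.trans hxz).le h.2.1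
      · exact absurd ⟨y, a, x, z, hya, hxz, h2, incompSymm hxy, hyz, h⟩ hI.2
      · exact absurd hxz.le (h2 ▸ h : Incomp x z).2.1
      · exact absurd ⟨x, z, y, a, hxz, hya, hxy, incompSymm h2, incompSymm hyz, incompSymm h⟩ hI.1

lemma reg_aux1 [Fintype P] (hI : Itov P) {x y z : P} (hzU : z ∈ maxChainUnion P)
    (hxz : Incomp x z) (hyz : Incomp y z) (hxy : x < y) : x ∈ maxChainUnion P := by
  obtain ⟨C, hC, hzC⟩ := hzU
  refine mem_U_of_replace hC hzC x ?_ ?_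
  · intro b hbC hbz
    rcases four_cases b x with h | h | h | h
    · exact h
    · exact absurd (h.trans hbz).le hxz.2.1
    · exact absurd ((h ▸ hbz : x < z)).le hxz.2.1
    · rcases four_cases b y with h2 | h2 | h2 | h2
      · exact absurd ⟨x, y, b, z, hxy, hbz, h2, incompSymm h, hxz, hyz⟩ hI.2
      · exact absurd (h2.trans hbz).le hyz.2.1
      · exact absurd ((h2 ▸ hbz : y < z)).le hyz.2.1
      · exact absurd ⟨x, y, b, z, hxy, hbz, incompSymm h, hxz, incompSymm h2, hyz⟩ hI.1
  · intro a haC hza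
    rcases four_cases a x with h | h | h | h
    · exact absurd (hza.trans h).le hxz.2.2
    · exact h
    · exact absurd ((h ▸ hza : z < x)).le hxz.2.2
    · rcases four_cases a y with h2 | h2 | h2 | h2
      · exact absurd (hza.trans h2).le hyz.2.2
      · exact absurd (hxy.trans h2).le h.2.2
      · exact absurd ((h2 ▸ hza : z < y)).le hyz.2.2
      · exact absurd ⟨x, y, z, a, hxy, hza, hxz, incompSymm h, hyz, incompSymm h2⟩ hI.1

lemma reg_aux2 [Fintype P] (hI : Itov P) {x y z : P} (hzU : z ∈ maxChainUnion P)
    (hxz : Incomp x z) (hyz : Incomp y z) (hyx : y < x) : x ∈ maxChainUnion P := by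
  obtain ⟨C, hC, hzC⟩ := hzU
  refine mem_U_of_replace hC hzC x ?_ ?_
  · intro b hbC hbz
    rcases four_cases b x with h | h | h | h
    · exact h
    · exact absurd (h.trans hbz).le hxz.2.1
    · exact absurd ((h ▸ hbz : x < z)).le hxz.2.1
    · rcases four_cases b y with h2 | h2 | h2 | h2
      · exact absurd (h2.trans hyx).le h.2.1
      · exact absurd (h2.trans hbz).le hyz.2.1
      · exact absurd ((h2 ▸ hbz : y < z)).le hyz.2.1
      · exact absurd ⟨y, x, b, z, hyx, hbz, incompSymm h2, hyz, incompSymm h, hxz⟩ hI.1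
  · intro a haC hza
    rcases four_cases a x with h | h | h | h
    · exact absurd (hza.trans h).le hxz.2.2
    · exact h
    · exact absurd ((h ▸ hza : z < x)).le hxz.2.2
    · rcases four_cases a y with h2 | h2 | h2 | h2
      · exact absurd (h2.trans hyx).le h.2.1
      · exact absurd ⟨z, a, y, x, hza, hyx, h2, incompSymm hyz, incompSymm hxz, h⟩ hI.2
      · exact absurd ((h2 ▸ hza : z < y)).le hyz.2.2
      · exact absurd ⟨y, x, z, a, hyx, hza, hyz, incompSymm h2, hxz, incompSymm h⟩ hI.1

lemma trunk_of_itov [Fintype P] (hI : Itov P) : IsTrunkOn (maxChainUnion P) := by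
  intro x y z _ hyU _ hxz hxy hyz
  refine ⟨hxz, fun h => ?_, fun h => ?_⟩
  · exact trunk_aux hI hyU hxy hyz (lt_of_le_of_ne h hxz)
  · exact trunk_aux hI hyU (incompSymm hyz) (incompSymm hxy) (lt_of_le_of_ne h (Ne.symm hxz))

lemma regular_of_itov [Fintype P] (hI : Itov P) {x : P} (hx : x ∉ maxChainUnion P) :
    RegularTo x (maxChainUnion P) := by
  intro y hy z hz hyz
  rcases hyz with rfl | hyz
  · exact ⟨Iff.rfl, Iff.rfl⟩
  constructor
  · constructor
    · intro hxy
      by_contra hnxz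
      have hxz : Incomp x z := by
        refine ⟨fun e => hx (e ▸ hz), fun h => hnxz (lt_of_le_of_ne h (fun e => hx (e ▸ hz))), ?_⟩
        intro h
        rcases eq_or_lt_of_le h with e | h'
        · exact hx (e.symm ▸ hz)
        · exact hyz.2.2 (h'.trans hxy).le
      exact hx (reg_aux1 hI hz hxz hyz hxy)
    · intro hxz
      by_contra hnxy
      have hxy : Incomp x y := by
        refine ⟨fun e => hx (e ▸ hy), fun h => hnxy (lt_of_le_of_ne h (fun e => hx (e ▸ hy))), ?_⟩
        intro h
        rcases eq_or_lt_of_le h with e | h'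
        · exact hx (e.symm ▸ hy)
        · exact hyz.2.1 (h'.trans hxz).le
      exact hx (reg_aux1 hI hy hxy (incompSymm hyz) hxz)
  · constructor
    · intro hyx
      by_contra hnzx
      have hxz : Incomp x z := by
        refine ⟨fun e => hx (e ▸ hz), ?_, fun h => hnzx (lt_of_le_of_ne h (fun e => hx (e.symm ▸ hz)))⟩
        intro h
        rcases eq_or_lt_of_le h with e | h'
        · exact hx (e ▸ hz)
        · exact hyz.2.1 (hyx.trans h').le
      exact hx (reg_aux2 hI hz hxz hyz hyx)
    · intro hzx
      by_contra hnyx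
      have hxy : Incomp x y := by
        refine ⟨fun e => hx (e ▸ hy), ?_, fun h => hnyx (lt_of_le_of_ne h (fun e => hx (e.symm ▸ hy)))⟩
        intro h
        rcases eq_or_lt_of_le h with e | h'
        · exact hx (e ▸ hy)
        · exact hyz.2.2 (hzx.trans h').le
      exact hx (reg_aux2 hI hy hxy (incompSymm hyz) hzx)

lemma obs_distinct {a b c d : P} (h : Obs1At a b c d ∨ Obs2At a b c d) :
    a ≠ b ∧ a ≠ c ∧ a ≠ d ∧ b ≠ c ∧ b ≠ d ∧ c ≠ d := by
  rcases h with ⟨h1, h2, h3, h4, h5, h6⟩ | ⟨h1, h2, h3, h4, h5, h6⟩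
  · exact ⟨h1.ne, h3.1, h4.1, h5.1, h6.1, h2.ne⟩
  · exact ⟨h1.ne, h4.1, h5.1, (h3.ne).symm, h6.1, h2.ne⟩

lemma backward_aux [Fintype P]
    (htr : IsTrunkOn (maxChainUnion P))
    (hio : ItovOn ((maxChainUnion P)ᶜ))
    (hreg : ∀ x : P, x ∉ maxChainUnion P → RegularTo x (maxChainUnion P))
    (hd4 : ¬∃ a b c d : P, (Obs1At a b c d ∨ Obs2At a b c d) ∧
          (∃ x ∈ ({a, b, c, d} : Set P), x ∈ maxChainUnion P) ∧
          (∃ x ∈ ({a, b, c, d} : Set P), ∃ y ∈ ({a, b, c, d} : Set P),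
            x ≠ y ∧ x ∉ maxChainUnion P ∧ y ∉ maxChainUnion P))
    {a b c d : P} (hobs : Obs1At a b c d ∨ Obs2At a b c d) : False := by
  obtain ⟨nab, nac, nad, nbc, nbd, ncd⟩ := obs_distinct hobs
  have hobs' := hobs
  rcases hobs' with ⟨h1, h2, h3, h4, h5, h6⟩ | ⟨h1, h2, h3, h4, h5, h6⟩ <;>
    by_cases hA : a ∈ maxChainUnion P <;> by_cases hB : b ∈ maxChainUnion P <;>
    by_cases hC : c ∈ maxChainUnion P <;> by_cases hD : d ∈ maxChainUnion P <;>
    first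
      | exact hio ⟨a, b, c, d, hA, hB, hC, hD, hobs⟩
      | exact (htr a c b hA hC hB nab h3 (incompSymm h5)).2.1 h1.le
      | exact (htr a d b hA hD hB nab h5 (incompSymm h6)).2.1 h1.le
      | exact h3.2.1 (((hreg a hA b hB c hC (Or.inr h5)).1.mp h1).le)
      | exact h5.2.2 (((hreg b hB a hA c hC (Or.inr h3)).2.mp h1).le)
      | exact h3.2.2 (((hreg c hC d hD a hA (Or.inr (incompSymm h4))).1.mp h2).le)
      | exact h4.2.1 (((hreg d hD c hC a hA (Or.inr (incompSymm h3))).2.mp h2).le)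
      | exact h5.2.1 (((hreg a hA b hB d hD (Or.inr h6)).1.mp h1).le)
      | exact h6.2.2 (((hreg b hB a hA d hD (Or.inr h5)).2.mp h1).le)
      | exact h4.2.2 (((hreg c hC d hD a hA (Or.inr (incompSymm h5))).1.mp h2).le)
      | exact h5.2.1 (((hreg d hD c hC a hA (Or.inr (incompSymm h4))).2.mp h2).le)
      | (refine hd4 ⟨a, b, c, d, hobs, ?_, ?_⟩ <;>
          first
            | exact ⟨a, by simp, hA⟩
            | exact ⟨b, by simp, hB⟩
            | exact ⟨c, by simp, hC⟩
            | exact ⟨d, by simp, hD⟩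
            | exact ⟨a, by simp, b, by simp, nab, hA, hB⟩
            | exact ⟨a, by simp, c, by simp, nac, hA, hC⟩
            | exact ⟨a, by simp, d, by simp, nad, hA, hD⟩
            | exact ⟨b, by simp, c, by simp, nbc, hB, hC⟩
            | exact ⟨b, by simp, d, by simp, nbd, hB, hD⟩
            | exact ⟨c, by simp, d, by simp, ncd, hC, hD⟩)

end AuxiliaryLemmas

/-- **Decomposition of finite (itov) orders.** A finite partial order `P` has property
(itov) iff, writing `U` for the union of all maximum chains of `P`: (a) `U` is a trunk;
(b) the suborder induced on `P \ U` has property (itov); (c) every element outside `U`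
is regular to `U`; and (d) no induced copy of `O_obs1` or `O_obs2` meets `U` and has at
least two elements outside `U`. -/
theorem itov_decomposition (P : Type*) [PartialOrder P] [Fintype P] :
    Itov P ↔
      (IsTrunkOn (maxChainUnion P) ∧
       ItovOn ((maxChainUnion P)ᶜ) ∧
       (∀ x : P, x ∉ maxChainUnion P → RegularTo x (maxChainUnion P)) ∧
       ¬∃ a b c d : P, (Obs1At a b c d ∨ Obs2At a b c d) ∧
          (∃ x ∈ ({a, b, c, d} : Set P), x ∈ maxChainUnion P) ∧
          (∃ x ∈ ({a, b, c, d} : Set P), ∃ y ∈ ({a, b, c, d} : Set P),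
            x ≠ y ∧ x ∉ maxChainUnion P ∧ y ∉ maxChainUnion P)) := by
  constructor
  · intro hI
    refine ⟨trunk_of_itov hI, ?_, fun x hx => regular_of_itov hI hx, ?_⟩
    · rintro ⟨a, b, c, d, _, _, _, _, h | h⟩
      · exact hI.1 ⟨a, b, c, d, h⟩
      · exact hI.2 ⟨a, b, c, d, h⟩
    · rintro ⟨a, b, c, d, h | h, -, -⟩
      · exact hI.1 ⟨a, b, c, d, h⟩
      · exact hI.2 ⟨a, b, c, d, h⟩
  · rintro ⟨htr, hio, hreg, hd4⟩
    refine ⟨?_, ?_⟩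
    · rintro ⟨a, b, c, d, h⟩
      exact backward_aux htr hio hreg hd4 (Or.inl h)
    · rintro ⟨a, b, c, d, h⟩
      exact backward_aux htr hio hreg hd4 (Or.inr h)
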